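/- arXiv:2310.18520 — 2 statements merged into one kernel-verified Lean document; each statement's English description precedes it below -/
import Mathlib

section
/- Let $P \subset [0,1]$ be the symmetric Cantor-like set of measure $1/2$ constructed with level-$n$ intervals of length $r_n = (n+4)/(2^{n+1}(n+2))$ and gaps $u_{n,k}$ of length $u_n = 1/(2^n(n+2)(n+3))$, and let $v_{n,k}$ be the open interval concentric with $u_{n,k}$ of length $u_n/2$. Define $F: [0,1] \to \mathbb{R}$ by $F = 0$ on $P$, $F = (-1)^n/n$ on each $v_{n,k}$, and linear on the two components of $u_{n,k} \setminus \overline{v_{n,k}}$. Then $F$ is continuous on $[0,1]$. -/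
open MeasureTheory Set

/-- Length of a level-`n` interval: `r_n = (n+4)/(2^(n+1)(n+2))`. -/
noncomputable def rlen (n : ℕ) : ℝ := ((n : ℝ) + 4) / (2 ^ (n + 1) * ((n : ℝ) + 2))

/-- Length of a gap removed from a level-`n` interval: `u_n = 1/(2^n (n+2)(n+3))`. -/
noncomputable def ulen (n : ℕ) : ℝ := 1 / (2 ^ n * ((n : ℝ) + 2) * ((n : ℝ) + 3))

/-- Left endpoint of the level-`n` interval indexed by the binary word `s`. -/
noncomputable def leftEnd : (n : ℕ) → (Fin n → Bool) → ℝ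
  | 0, _ => 0
  | n + 1, s => leftEnd n (fun i => s i.castSucc) +
      (if s (Fin.last n) then rlen n - rlen (n + 1) else 0)

/-- The union of the `2^n` closed level-`n` intervals. -/
noncomputable def levelSet (n : ℕ) : Set ℝ :=
  ⋃ s : Fin n → Bool, Set.Icc (leftEnd n s) (leftEnd n s + rlen n)

/-- The Cantor-like set `P`. -/
noncomputable def cantorP : Set ℝ := ⋂ n, levelSet n

/-- Left endpoint of the gap removed from the level-`n` interval `s`. -/
noncomputable def gapL (n : ℕ) (s : Fin n → Bool) : ℝ :=
  leftEnd n s + (rlen n - ulen n) / 2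

/-- Right endpoint of the gap removed from the level-`n` interval `s`. -/
noncomputable def gapR (n : ℕ) (s : Fin n → Bool) : ℝ :=
  leftEnd n s + (rlen n + ulen n) / 2

/-- Left endpoint of the middle (plateau) part `v_{n,s}` of the gap. -/
noncomputable def vL (n : ℕ) (s : Fin n → Bool) : ℝ := gapL n s + ulen n / 4

/-- Right endpoint of the middle (plateau) part `v_{n,s}` of the gap. -/
noncomputable def vR (n : ℕ) (s : Fin n → Bool) : ℝ := gapR n s - ulen n / 4

/-- The plateau value `(-1)^n/n` on generation-`n` gaps (value `0` for `n = 0`). -/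
noncomputable def pval (n : ℕ) : ℝ := if n = 0 then 0 else (-1) ^ n / (n : ℝ)

/-!
On a gap of generation `n`, `F` is a tent of height `|pval n| ≤ 1/n` whose ramps have width
`u_n / 4`, so `F` is continuous off `P`. At a point `x ∈ P`, a nearby `y` lies in `P`, or in a gap
of generation `> N`, where `|F y| ≤ 1/(N+1)`, or in a gap of generation `≤ N`; such a gap does
not contain `x`, so the ramp gives `|F y| ≤ 4 |y - x| / u_N`.
-/

open Function

lemma rlen_pos (n : ℕ) : 0 < rlen n := by
  unfold rlen; positivity

lemma ulen_pos (n : ℕ) : 0 < ulen n := by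
  unfold ulen; positivity

lemma rlen_eq_two_mul_rlen_succ_add_ulen (n : ℕ) : rlen n = 2 * rlen (n + 1) + ulen n := by
  unfold rlen ulen
  push_cast
  field_simp
  ring

lemma ulen_antitone : Antitone ulen := by
  intro m n h
  have h' : (m : ℝ) ≤ n := by exact_mod_cast h
  unfold ulen
  gcongr
  exact one_le_two

lemma abs_pval_le_inv (n : ℕ) : |pval n| ≤ (n : ℝ)⁻¹ := by
  unfold pval
  split_ifs <;> simp [abs_div]

lemma abs_pval_le_one (n : ℕ) : |pval n| ≤ 1 :=
  (abs_pval_le_inv n).trans (Nat.cast_inv_le_one n)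

lemma gapL_eq (n : ℕ) (s : Fin n → Bool) : gapL n s = leftEnd n s + rlen (n + 1) := by
  have := rlen_eq_two_mul_rlen_succ_add_ulen n
  unfold gapL; linarith

lemma gapR_eq (n : ℕ) (s : Fin n → Bool) : gapR n s = leftEnd n s + rlen n - rlen (n + 1) := by
  have := rlen_eq_two_mul_rlen_succ_add_ulen n
  unfold gapR; linarith

lemma gapR_sub_gapL (n : ℕ) (s : Fin n → Bool) : gapR n s - gapL n s = ulen n := by
  unfold gapR gapL; ring

def levelIcc (n : ℕ) (s : Fin n → Bool) : Set ℝ := Icc (leftEnd n s) (leftEnd n s + rlen n)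

lemma levelIcc_snoc_false (n : ℕ) (s : Fin n → Bool) :
    levelIcc (n + 1) (Fin.snoc s false) = Icc (leftEnd n s) (gapL n s) := by
  simp [levelIcc, leftEnd, gapL_eq]

lemma levelIcc_snoc_true (n : ℕ) (s : Fin n → Bool) :
    levelIcc (n + 1) (Fin.snoc s true) = Icc (gapR n s) (leftEnd n s + rlen n) := by
  simp only [levelIcc, leftEnd, Fin.snoc_castSucc, Fin.snoc_last, if_true, gapR_eq]
  congr 1 <;> ring

lemma levelIcc_snoc_subset (n : ℕ) (s : Fin n → Bool) (b : Bool) :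
    levelIcc (n + 1) (Fin.snoc s b) ⊆ levelIcc n s := by
  have := gapL_eq n s
  have := gapR_eq n s
  have := rlen_eq_two_mul_rlen_succ_add_ulen n
  have := rlen_pos (n + 1)
  have := ulen_pos n
  cases b
  · rw [levelIcc_snoc_false]; exact Icc_subset_Icc le_rfl (by linarith)
  · rw [levelIcc_snoc_true]; exact Icc_subset_Icc (by linarith) le_rfl

lemma gap_subset_levelIcc (n : ℕ) (s : Fin n → Bool) :
    Ioo (gapL n s) (gapR n s) ⊆ levelIcc n s := by
  have := rlen_pos (n + 1)
  have := rlen_eq_two_mul_rlen_succ_add_ulen n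
  exact Ioo_subset_Icc_self.trans (Icc_subset_Icc (by rw [gapL_eq]; linarith)
    (by rw [gapR_eq]; linarith))

lemma disjoint_levelIcc_snoc (n : ℕ) (s : Fin n → Bool) :
    Disjoint (levelIcc (n + 1) (Fin.snoc s false)) (levelIcc (n + 1) (Fin.snoc s true)) := by
  have := gapR_sub_gapL n s
  have := ulen_pos n
  rw [levelIcc_snoc_false, levelIcc_snoc_true, Set.disjoint_left]
  rintro x ⟨-, hxL⟩ ⟨hxR, -⟩
  linarith

lemma exists_eq_snoc {n : ℕ} (t : Fin (n + 1) → Bool) : ∃ s b, t = Fin.snoc s b :=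
  ⟨Fin.init t, t (Fin.last n), (Fin.snoc_init_self t).symm⟩

lemma pairwise_disjoint_levelIcc : ∀ n, Pairwise (Disjoint on levelIcc n)
  | 0 => fun s t hst => (hst (Subsingleton.elim s t)).elim
  | n + 1 => by
    intro s t hst
    obtain ⟨u, b, rfl⟩ := exists_eq_snoc s
    obtain ⟨v, c, rfl⟩ := exists_eq_snoc t
    by_cases huv : u = v
    · subst huv
      cases b <;> cases c
      · exact (hst rfl).elim
      · exact disjoint_levelIcc_snoc n u
      · exact (disjoint_levelIcc_snoc n u).symm
      · exact (hst rfl).elim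
    · exact (pairwise_disjoint_levelIcc n huv).mono
        (levelIcc_snoc_subset n u b) (levelIcc_snoc_subset n v c)

lemma notMem_gap_of_mem_cantorP {x : ℝ} (hx : x ∈ cantorP) (n : ℕ) (s : Fin n → Bool) :
    x ∉ Ioo (gapL n s) (gapR n s) := by
  intro hgap
  obtain ⟨t, ht⟩ : ∃ t, x ∈ levelIcc (n + 1) t := mem_iUnion.mp (mem_iInter.mp hx (n + 1))
  obtain ⟨u, b, rfl⟩ := exists_eq_snoc t
  by_cases hus : u = s
  · subst hus
    cases b
    · rw [levelIcc_snoc_false] at ht; exact ht.2.not_gt hgap.1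
    · rw [levelIcc_snoc_true] at ht; exact ht.1.not_gt hgap.2
  · exact Set.disjoint_left.mp (pairwise_disjoint_levelIcc n hus)
      (levelIcc_snoc_subset n u b ht) (gap_subset_levelIcc n s hgap)

lemma mem_levelSet_succ_of_notMem_gap {x : ℝ} {n : ℕ} {s : Fin n → Bool}
    (hx : x ∈ levelIcc n s) (hgap : x ∉ Ioo (gapL n s) (gapR n s)) : x ∈ levelSet (n + 1) := by
  rcases le_or_gt x (gapL n s) with hL | hL
  · have : x ∈ levelIcc (n + 1) (Fin.snoc s false) := by
      rw [levelIcc_snoc_false]; exact ⟨hx.1, hL⟩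
    exact mem_iUnion.mpr ⟨_, this⟩
  · have hR : gapR n s ≤ x := not_lt.mp fun hR => hgap ⟨hL, hR⟩
    have : x ∈ levelIcc (n + 1) (Fin.snoc s true) := by
      rw [levelIcc_snoc_true]; exact ⟨hR, hx.2⟩
    exact mem_iUnion.mpr ⟨_, this⟩

lemma exists_mem_gap_of_notMem_cantorP {x : ℝ} (hx : x ∈ Icc (0 : ℝ) 1) (hxP : x ∉ cantorP) :
    ∃ n s, x ∈ Ioo (gapL n s) (gapR n s) := by
  by_contra! hgap
  refine hxP (mem_iInter.mpr fun n => ?_)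
  induction n with
  | zero => exact mem_iUnion.mpr ⟨finZeroElim, by norm_num [levelIcc, leftEnd, rlen]; exact hx⟩
  | succ n ih =>
    obtain ⟨s, hs⟩ : ∃ s, x ∈ levelIcc n s := mem_iUnion.mp ih
    exact mem_levelSet_succ_of_notMem_gap hs (hgap n s)

noncomputable def tent (a b q c : ℝ) (y : ℝ) : ℝ := c * min 1 (min (y - a) (b - y) / q)

section Tent

variable {a b q c x y : ℝ}

lemma continuous_tent (a b q c : ℝ) : Continuous (tent a b q c) := by
  unfold tent; fun_prop

lemma abs_tent (hq : 0 ≤ q) (hy : y ∈ Icc a b) :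
    |tent a b q c y| = |c| * min 1 (min (y - a) (b - y) / q) := by
  have : 0 ≤ min (y - a) (b - y) := le_min (by linarith [hy.1]) (by linarith [hy.2])
  rw [tent, abs_mul, abs_of_nonneg (le_min zero_le_one (div_nonneg this hq))]

lemma abs_tent_le (hq : 0 ≤ q) (hy : y ∈ Icc a b) : |tent a b q c y| ≤ |c| := by
  rw [abs_tent hq hy]
  exact mul_le_of_le_one_right (abs_nonneg c) (min_le_left _ _)

lemma abs_tent_le_of_notMem (hq : 0 < q) (hy : y ∈ Icc a b) (hx : x ∉ Ioo a b) :
    |tent a b q c y| ≤ |c| * (|y - x| / q) := by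
  have hdist : min (y - a) (b - y) ≤ |y - x| := by
    rcases le_or_gt x a with hxa | hax
    · exact (min_le_left _ _).trans (by rw [abs_of_nonneg (by linarith [hy.1])]; linarith)
    · have hbx : b ≤ x := not_lt.mp fun hxb => hx ⟨hax, hxb⟩
      refine (min_le_right _ _).trans ?_
      rw [abs_sub_comm, abs_of_nonneg (by linarith [hy.2])]
      linarith
  rw [abs_tent hq.le hy]
  gcongr
  exact (min_le_right _ _).trans (by gcongr)

lemma eqOn_tent {f : ℝ → ℝ} (hq : 0 < q) (hab : a + q ≤ b - q)
    (hmid : ∀ y ∈ Icc (a + q) (b - q), f y = c)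
    (hleft : ∀ y ∈ Icc a (a + q), f y = c * ((y - a) / q))
    (hright : ∀ y ∈ Icc (b - q) b, f y = c * ((b - y) / q)) :
    EqOn f (tent a b q c) (Icc a b) := by
  intro y hy
  rcases le_or_gt y (a + q) with h1 | h1
  · have hmin : min (y - a) (b - y) = y - a := min_eq_left (by linarith)
    rw [hleft y ⟨hy.1, h1⟩, tent, hmin, min_eq_right ((div_le_one hq).mpr (by linarith))]
  rcases le_or_gt y (b - q) with h2 | h2
  · rw [hmid y ⟨h1.le, h2⟩, tent, min_eq_left ((le_div_iff₀ hq).mpr _), mul_one]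
    rw [one_mul, le_min_iff]
    constructor <;> linarith
  · have hmin : min (y - a) (b - y) = b - y := min_eq_right (by linarith)
    rw [hright y ⟨h2.le, hy.2⟩, tent, hmin, min_eq_right ((div_le_one hq).mpr (by linarith))]

end Tent

noncomputable def gapTent (n : ℕ) (s : Fin n → Bool) : ℝ → ℝ :=
  tent (gapL n s) (gapR n s) (ulen n / 4) (pval n)

lemma eqOn_gapTent {F : ℝ → ℝ} {n : ℕ} {s : Fin n → Bool}
    (hplateau : ∀ x ∈ Icc (vL n s) (vR n s), F x = pval n)
    (hlinL : ∀ x ∈ Icc (gapL n s) (vL n s),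
      F x = pval n * ((x - gapL n s) / (vL n s - gapL n s)))
    (hlinR : ∀ x ∈ Icc (vR n s) (gapR n s),
      F x = pval n * ((gapR n s - x) / (gapR n s - vR n s))) :
    EqOn F (gapTent n s) (Icc (gapL n s) (gapR n s)) := by
  have hu := ulen_pos n
  have hvL : vL n s - gapL n s = ulen n / 4 := by unfold vL; ring
  have hvR : gapR n s - vR n s = ulen n / 4 := by unfold vR; ring
  refine eqOn_tent (by positivity) (by linarith [gapR_sub_gapL n s]) hplateau
    (fun y hy => by rw [hlinL y hy, hvL]) (fun y hy => by rw [hlinR y hy, hvR])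

section PointOfP

variable {F : ℝ → ℝ} (hP : ∀ x ∈ cantorP, F x = 0)
  (hgap : ∀ n s, EqOn F (gapTent n s) (Icc (gapL n s) (gapR n s)))
include hP hgap

lemma abs_le_of_mem_cantorP {x y : ℝ} (hx : x ∈ cantorP) (hy : y ∈ Icc (0 : ℝ) 1) (N : ℕ) :
    |F y| ≤ max ((N + 1 : ℝ)⁻¹) (|y - x| / (ulen N / 4)) := by
  by_cases hyP : y ∈ cantorP
  · rw [hP y hyP, abs_zero]
    exact le_max_of_le_left (by positivity)
  obtain ⟨n, s, hys⟩ := exists_mem_gap_of_notMem_cantorP hy hyP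
  have hys' := Ioo_subset_Icc_self hys
  have hu := ulen_pos n
  rw [hgap n s hys', gapTent]
  rcases le_or_gt n N with hn | hn
  · refine le_max_of_le_right ?_
    calc _ ≤ |pval n| * (|y - x| / (ulen n / 4)) :=
          abs_tent_le_of_notMem (by positivity) hys' (notMem_gap_of_mem_cantorP hx n s)
      _ ≤ 1 * (|y - x| / (ulen N / 4)) := by
          have := ulen_pos N
          gcongr
          · exact abs_pval_le_one n
          · exact ulen_antitone hn
      _ = _ := one_mul _
  · refine le_max_of_le_left ?_
    calc _ ≤ |pval n| := abs_tent_le (by positivity) hys'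
      _ ≤ (n : ℝ)⁻¹ := abs_pval_le_inv n
      _ ≤ (N + 1 : ℝ)⁻¹ := by gcongr; exact_mod_cast hn

lemma continuousWithinAt_of_mem_cantorP {x : ℝ} (hx : x ∈ cantorP) :
    ContinuousWithinAt F (Icc 0 1) x := by
  rw [Metric.continuousWithinAt_iff]
  intro ε hε
  obtain ⟨N, hN⟩ := exists_nat_one_div_lt hε
  have hu := ulen_pos N
  refine ⟨ulen N / 4 * ε, by positivity, fun y hy hxy => ?_⟩
  rw [Real.dist_eq] at hxy
  rw [Real.dist_eq, hP x hx, sub_zero]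
  refine (abs_le_of_mem_cantorP hP hgap hx hy N).trans_lt (max_lt ?_ ?_)
  · simpa using hN
  · rwa [div_lt_iff₀ (by positivity), mul_comm]

end PointOfP

theorem cantor_function_continuous (F : ℝ → ℝ)
    (hP : ∀ x ∈ cantorP, F x = 0)
    (hplateau : ∀ (n : ℕ) (s : Fin n → Bool),
      ∀ x ∈ Set.Icc (vL n s) (vR n s), F x = pval n)
    (hlinL : ∀ (n : ℕ) (s : Fin n → Bool),
      ∀ x ∈ Set.Icc (gapL n s) (vL n s),
        F x = pval n * ((x - gapL n s) / (vL n s - gapL n s)))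
    (hlinR : ∀ (n : ℕ) (s : Fin n → Bool),
      ∀ x ∈ Set.Icc (vR n s) (gapR n s),
        F x = pval n * ((gapR n s - x) / (gapR n s - vR n s))) :
    ContinuousOn F (Set.Icc 0 1) := by
  have hgap : ∀ n s, EqOn F (gapTent n s) (Icc (gapL n s) (gapR n s)) := fun n s =>
    eqOn_gapTent (hplateau n s) (hlinL n s) (hlinR n s)
  intro x hx
  by_cases hxP : x ∈ cantorP
  · exact continuousWithinAt_of_mem_cantorP hP hgap hxP
  obtain ⟨n, s, hxs⟩ := exists_mem_gap_of_notMem_cantorP hx hxP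
  have hcont : ContinuousAt (gapTent n s) x := (continuous_tent _ _ _ _).continuousAt
  refine (hcont.congr ?_).continuousWithinAt
  filter_upwards [Ioo_mem_nhds hxs.1 hxs.2] with y hy
  exact (hgap n s (Ioo_subset_Icc_self hy)).symm
end

section
/- Let $W \subseteq [a,b]$, let $\overline{T} \supseteq W$ where $T \subseteq [a,b]$, suppose every point of $W$ is a two-sided limit point of $\overline{T}$, and suppose $F$ is continuous relative to a set $E \supseteq W \cup T$. If for some $\gamma, \eta > 0$ every $\gamma$-fine partition tagged in $T$ of total length $< \eta$ satisfies $\sum_i \left(\frac{1}{d_i-c_i}\int_{c_i}^{d_i}|F(y)-F(x_i)|^r dy\right)^{1/r} < 1$, then every $\gamma$-fine partition tagged in $W$ of total length $< \eta$ satisfies $\sum_i \left(\frac{1}{d_i-c_i}\int_{c_i}^{d_i}|F(y)-F(x_i)|^r dy\right)^{1/r} < 2$. -/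
open MeasureTheory Set

/-- A finite tagged partition in `[a,b]`. -/
def IsTaggedPart (n : ℕ) (c d x : Fin n → ℝ) (a b : ℝ) : Prop :=
  (∀ i, c i < d i) ∧ (∀ i, x i ∈ Set.Icc (c i) (d i)) ∧
  (∀ i, Set.Icc (c i) (d i) ⊆ Set.Icc a b) ∧
  (∀ i j, i ≠ j → d i ≤ c j ∨ d j ≤ c i)

/-!
Move each tag `x ∈ W` to a point `t ∈ T` of the same interval, so close to `x` that the
partition stays `γ`-fine and `|F t - F x| < 1 / (n + 1)`; such a `t` exists because `x` is a
two-sided limit point of `closure T` (one side stays inside `[c, d]` even when `x` is an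
endpoint) and `F` is continuous relative to `E ⊇ W ∪ T`. Minkowski's inequality gives
`mean |F - F x| ≤ mean |F - F t| + |F t - F x|`, and summing bounds the `W`-tagged sum by
the `T`-tagged one, which is `< 1`, plus `n / (n + 1) < 1`.
-/

open Filter Topology

noncomputable def intervalLpMean (r : ℝ) (f : ℝ → ℝ) (c d : ℝ) : ℝ :=
  ((d - c)⁻¹ * ∫ y in c..d, |f y| ^ r) ^ (1 / r)

section intervalLpMean

variable {r c d : ℝ} {f g : ℝ → ℝ}

theorem intervalLpMean_eq_eLpNorm (hr : 0 < r) (hcd : c ≤ d)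
    (hf : MemLp f (ENNReal.ofReal r) (volume.restrict (Ioc c d))) :
    intervalLpMean r f c d =
      (d - c)⁻¹ ^ (1 / r) * (eLpNorm f (ENNReal.ofReal r) (volume.restrict (Ioc c d))).toReal := by
  have hp : ENNReal.ofReal r ≠ 0 := ENNReal.ofReal_ne_zero_iff.2 hr
  rw [intervalLpMean, intervalIntegral.integral_of_le hcd,
    Real.mul_rpow (inv_nonneg.2 (sub_nonneg.2 hcd)) (integral_nonneg fun _ => by positivity),
    hf.eLpNorm_eq_integral_rpow_norm hp ENNReal.ofReal_ne_top,
    ENNReal.toReal_ofReal (by positivity)]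
  simp only [Real.norm_eq_abs, ENNReal.toReal_ofReal hr.le, one_div]

theorem intervalLpMean_add_le (hr : 1 ≤ r) (hcd : c ≤ d)
    (hf : MemLp f (ENNReal.ofReal r) (volume.restrict (Ioc c d)))
    (hg : MemLp g (ENNReal.ofReal r) (volume.restrict (Ioc c d))) :
    intervalLpMean r (f + g) c d ≤ intervalLpMean r f c d + intervalLpMean r g c d := by
  have hr0 : 0 < r := one_pos.trans_le hr
  rw [intervalLpMean_eq_eLpNorm hr0 hcd (hf.add hg), intervalLpMean_eq_eLpNorm hr0 hcd hf,
    intervalLpMean_eq_eLpNorm hr0 hcd hg, ← mul_add]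
  have hp : 1 ≤ ENNReal.ofReal r := ENNReal.one_le_ofReal.2 hr
  exact mul_le_mul_of_nonneg_left
    (ENNReal.toReal_le_add (eLpNorm_add_le hf.1 hg.1 hp) hf.eLpNorm_ne_top hg.eLpNorm_ne_top)
    (Real.rpow_nonneg (inv_nonneg.2 (sub_nonneg.2 hcd)) _)

theorem intervalLpMean_const (hr : 0 < r) (hcd : c < d) (k : ℝ) :
    intervalLpMean r (fun _ => k) c d = |k| := by
  have hdc : d - c ≠ 0 := (sub_pos.2 hcd).ne'
  rw [intervalLpMean, intervalIntegral.integral_const, smul_eq_mul, inv_mul_cancel_left₀ hdc,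
    one_div, Real.rpow_rpow_inv (abs_nonneg k) hr.ne']

theorem intervalLpMean_sub_const_le (hr : 1 ≤ r) (hcd : c < d)
    (hf : MemLp f (ENNReal.ofReal r) (volume.restrict (Ioc c d))) (a b : ℝ) :
    intervalLpMean r (fun y => f y - a) c d ≤ intervalLpMean r (fun y => f y - b) c d + |b - a| := by
  have hsplit : (fun y => f y - a) = (fun y => f y - b) + fun _ => b - a := by
    ext y
    simp only [Pi.add_apply, sub_add_sub_cancel]
  rw [hsplit, ← intervalLpMean_const (one_pos.trans_le hr) hcd (b - a)]
  exact intervalLpMean_add_le hr hcd.le (hf.sub (memLp_const b)) (memLp_const _)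

end intervalLpMean

theorem exists_mem_Icc_inter_of_mem_nhds {T U : Set ℝ} {c d x : ℝ} (hcd : c < d)
    (hx : x ∈ Icc c d)
    (h2side : ∀ ε > (0 : ℝ),
      (closure T ∩ Ioo (x - ε) x).Nonempty ∧ (closure T ∩ Ioo x (x + ε)).Nonempty)
    (hU : U ∈ 𝓝 x) : ∃ t ∈ T, t ∈ Icc c d ∩ U := by
  obtain ⟨ε, hε, hball⟩ := Metric.mem_nhds_iff.1 hU
  rw [Real.ball_eq_Ioo] at hball
  rcases hx.2.lt_or_eq with hxd | rfl
  · obtain ⟨t, htT, ht⟩ := (closure_inter_open_nonempty_iff isOpen_Ioo).1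
      (h2side (min ε (d - x)) (lt_min hε (sub_pos.2 hxd))).2
    have := min_le_left ε (d - x)
    have := min_le_right ε (d - x)
    exact ⟨t, htT, ⟨by linarith [hx.1, ht.1], by linarith [ht.2]⟩,
      hball ⟨by linarith [ht.1], by linarith [ht.2]⟩⟩
  · obtain ⟨t, htT, ht⟩ := (closure_inter_open_nonempty_iff isOpen_Ioo).1
      (h2side (min ε (x - c)) (lt_min hε (sub_pos.2 hcd))).1
    have := min_le_left ε (x - c)
    have := min_le_right ε (x - c)
    exact ⟨t, htT, ⟨by linarith [ht.1], ht.2.le⟩,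
      hball ⟨by linarith [ht.1], by linarith [ht.2]⟩⟩

theorem exists_retag {T E : Set ℝ} {F : ℝ → ℝ} {c d x γ ε : ℝ} (hcd : c < d)
    (hx : x ∈ Icc c d)
    (h2side : ∀ ε > (0 : ℝ),
      (closure T ∩ Ioo (x - ε) x).Nonempty ∧ (closure T ∩ Ioo x (x + ε)).Nonempty)
    (hTE : T ⊆ E) (hFx : ContinuousWithinAt F E x) (hfine : Icc c d ⊆ Ioo (x - γ) (x + γ))
    (hε : 0 < ε) :
    ∃ t ∈ T, t ∈ Icc c d ∧ Icc c d ⊆ Ioo (t - γ) (t + γ) ∧ |F t - F x| < ε := by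
  rw [Icc_subset_Ioo_iff hcd.le] at hfine
  have hfine_nhds : Ioo (d - γ) (c + γ) ∈ 𝓝 x :=
    Ioo_mem_nhds (by linarith [hfine.2]) (by linarith [hfine.1])
  have hclose_nhds : ∀ᶠ z in 𝓝 x, z ∈ E → dist (F z) (F x) < ε :=
    eventually_nhdsWithin_iff.1 (Metric.tendsto_nhds.1 hFx ε hε)
  obtain ⟨t, htT, htcd, htfine, htclose⟩ :=
    exists_mem_Icc_inter_of_mem_nhds hcd hx h2side (inter_mem hfine_nhds hclose_nhds)
  refine ⟨t, htT, htcd, (Icc_subset_Ioo_iff hcd.le).2 ⟨?_, ?_⟩, ?_⟩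
  · linarith [htfine.2]
  · linarith [htfine.1]
  · simpa only [Real.dist_eq] using htclose (hTE htT)

theorem sum_lt_one_of_forall_lt_inv_succ {n : ℕ} {u : Fin n → ℝ}
    (hu : ∀ i, u i < 1 / (n + 1)) : ∑ i, u i < 1 :=
  calc ∑ i, u i ≤ ∑ _i : Fin n, 1 / ((n : ℝ) + 1) := Finset.sum_le_sum fun i _ => (hu i).le
    _ = n / (n + 1) := by
      rw [Finset.sum_const, Finset.card_univ, Fintype.card_fin, nsmul_eq_mul, mul_one_div]
    _ < 1 := (div_lt_one (by positivity)).2 (lt_add_one _)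

theorem retag_partition_estimate_general {r a b γ η : ℝ} (hr : 1 ≤ r) (W T E : Set ℝ) (F : ℝ → ℝ)
    (h2side : ∀ w ∈ W, ∀ ε > (0 : ℝ),
      ((closure T) ∩ Set.Ioo (w - ε) w).Nonempty ∧
      ((closure T) ∩ Set.Ioo w (w + ε)).Nonempty)
    (hE : W ∪ T ⊆ E) (hcont : ContinuousOn F E)
    (hF : MemLp F (ENNReal.ofReal r) (volume.restrict (Set.Icc a b)))
    (hTpart : ∀ (n : ℕ) (c d x : Fin n → ℝ), IsTaggedPart n c d x a b →
      (∀ i, x i ∈ T) →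
      (∀ i, Set.Icc (c i) (d i) ⊆ Set.Ioo (x i - γ) (x i + γ)) →
      (∑ i, (d i - c i)) < η →
      (∑ i, ((d i - c i)⁻¹ * ∫ y in (c i)..(d i), |F y - F (x i)| ^ r) ^ (1 / r)) < 1) :
    ∀ (n : ℕ) (c d x : Fin n → ℝ), IsTaggedPart n c d x a b →
      (∀ i, x i ∈ W) →
      (∀ i, Set.Icc (c i) (d i) ⊆ Set.Ioo (x i - γ) (x i + γ)) →
      (∑ i, (d i - c i)) < η →
      (∑ i, ((d i - c i)⁻¹ * ∫ y in (c i)..(d i), |F y - F (x i)| ^ r) ^ (1 / r)) < 2 := by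
  intro n c d x ⟨hcd, hx, hsub, hdisj⟩ hxW hfine hlen
  choose t htT htcd htfine hclose using fun i =>
    exists_retag (hcd i) (hx i) (h2side _ (hxW i)) (subset_union_right.trans hE)
      (hcont _ (hE (Or.inl (hxW i)))) (hfine i) (ε := 1 / ((n : ℝ) + 1)) (by positivity)
  have hretag := hTpart n c d t ⟨hcd, htcd, hsub, hdisj⟩ htT htfine hlen
  have hFi : ∀ i, MemLp F (ENNReal.ofReal r) (volume.restrict (Ioc (c i) (d i))) := fun i =>
    hF.mono_measure (Measure.restrict_mono (Ioc_subset_Icc_self.trans (hsub i)) le_rfl)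
  change ∑ i, intervalLpMean r (fun y => F y - F (t i)) (c i) (d i) < 1 at hretag
  change ∑ i, intervalLpMean r (fun y => F y - F (x i)) (c i) (d i) < 2
  calc ∑ i, intervalLpMean r (fun y => F y - F (x i)) (c i) (d i)
      ≤ ∑ i, (intervalLpMean r (fun y => F y - F (t i)) (c i) (d i) + |F (t i) - F (x i)|) :=
        Finset.sum_le_sum fun i _ => intervalLpMean_sub_const_le hr (hcd i) (hFi i) _ _
    _ = ∑ i, intervalLpMean r (fun y => F y - F (t i)) (c i) (d i)
          + ∑ i, |F (t i) - F (x i)| := Finset.sum_add_distrib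
    _ < 1 + 1 := add_lt_add hretag (sum_lt_one_of_forall_lt_inv_succ hclose)
    _ = 2 := one_add_one_eq_two

theorem retag_partition_estimate {r a b γ η : ℝ} (hr : 1 ≤ r) (hγ : 0 < γ)
    (hη : 0 < η) (W T E : Set ℝ) (F : ℝ → ℝ)
    (hW : W ⊆ Set.Icc a b) (hT : T ⊆ Set.Icc a b)
    (hWT : W ⊆ closure T)
    (h2side : ∀ w ∈ W, ∀ ε > (0 : ℝ),
      ((closure T) ∩ Set.Ioo (w - ε) w).Nonempty ∧
      ((closure T) ∩ Set.Ioo w (w + ε)).Nonempty)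
    (hE : W ∪ T ⊆ E) (hcont : ContinuousOn F E)
    (hF : MemLp F (ENNReal.ofReal r) (volume.restrict (Set.Icc a b)))
    (hTpart : ∀ (n : ℕ) (c d x : Fin n → ℝ), IsTaggedPart n c d x a b →
      (∀ i, x i ∈ T) →
      (∀ i, Set.Icc (c i) (d i) ⊆ Set.Ioo (x i - γ) (x i + γ)) →
      (∑ i, (d i - c i)) < η →
      (∑ i, ((d i - c i)⁻¹ * ∫ y in (c i)..(d i), |F y - F (x i)| ^ r) ^ (1 / r)) < 1) :
    ∀ (n : ℕ) (c d x : Fin n → ℝ), IsTaggedPart n c d x a b →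
      (∀ i, x i ∈ W) →
      (∀ i, Set.Icc (c i) (d i) ⊆ Set.Ioo (x i - γ) (x i + γ)) →
      (∑ i, (d i - c i)) < η →
      (∑ i, ((d i - c i)⁻¹ * ∫ y in (c i)..(d i), |F y - F (x i)| ^ r) ^ (1 / r)) < 2 :=
  retag_partition_estimate_general hr W T E F h2side hE hcont hF hTpart
end
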